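/- Let M be a closed oriented n-manifold and f : M → M an L-Lipschitz map of degree d > 0. If for some k with 1 ≤ k ≤ n−1 the induced map f* : H^k(M;ℂ) → H^k(M;ℂ) has an eigenvalue λ with |λ| ≠ d^{k/n}, then L ≥ d^{1/n}·c for some c > 1 depending on |λ|·d^{-k/n}; more precisely either L ≥ |λ|^{1/k} > d^{1/n}, or (by Poincaré duality) f* on H^{n−k}(M;ℂ) has an eigenvalue μ with |μ| = d/|λ| > d^{(n−k)/n}, so L ≥ |μ|^{1/(n−k)} > d^{1/n}. -/

import Mathlib

/-! An eigenvalue `λ` of an endomorphism of norm at most `L^m` satisfies `|λ| ≤ L^m`, so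
`L ≥ |λ|^{1/m}`. If `|λ| > d^{k/n}` on `H^k` this already gives `L > d^{1/n}`. Otherwise, for an
eigenvector `v`, the compatibility `B(Tv, Sw) = d B(v, w)` says that the nonzero functional
`B v` on `H^{n-k}` is an eigenvector of the transpose of `S` with eigenvalue `d/λ`; hence `d/λ`
is an eigenvalue of `S` itself, and `|d/λ| > d^{(n-k)/n}`. -/

namespace Module.End

theorem HasEigenvalue.norm_le {𝕜 E : Type*} [NormedField 𝕜] [NormedAddCommGroup E]
    [NormedSpace 𝕜 E] {T : End 𝕜 E} {C : ℝ} (hT : ∀ u, ‖T u‖ ≤ C * ‖u‖) {μ : 𝕜}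
    (hμ : T.HasEigenvalue μ) : ‖μ‖ ≤ C := by
  obtain ⟨v, hv⟩ := hμ.exists_hasEigenvector
  have hv0 : 0 < ‖v‖ := norm_pos_iff.mpr hv.2
  refine le_of_mul_le_mul_right ?_ hv0
  simpa only [hv.apply_eq_smul, norm_smul] using hT v

theorem HasEigenvalue.of_dualMap {K W : Type*} [Field K] [AddCommGroup W] [Module K W]
    [FiniteDimensional K W] {S : End K W} {c : K} (hc : HasEigenvalue S.dualMap c) :
    S.HasEigenvalue c := by
  obtain ⟨φ, hφ⟩ := hc.exists_hasEigenvector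
  -- `φ` kills the range of `S - c`, so `S - c` is not surjective, hence not injective.
  rw [hasEigenvalue_iff, eigenspace_def, Ne, LinearMap.ker_eq_bot_iff_range_eq_top]
  intro hsurj
  refine hφ.2 (LinearMap.ext fun w' => ?_)
  obtain ⟨w, rfl⟩ := LinearMap.range_eq_top.mp hsurj w'
  have := LinearMap.congr_fun hφ.apply_eq_smul w
  simp only [LinearMap.dualMap_apply, LinearMap.smul_apply, smul_eq_mul] at this
  simp [this]

end Module.End

section Pairing

variable {K V W : Type*} [Field K] [AddCommGroup V] [Module K V] [AddCommGroup W] [Module K W]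
  {T : Module.End K V} {S : Module.End K W} {B : V →ₗ[K] W →ₗ[K] K} {d μ : K} {v : V}

theorem mul_pairing_comp_eq_of_hasEigenvector (hcompat : ∀ v w, B (T v) (S w) = d * B v w)
    (hv : T.HasEigenvector μ v) (w : W) :
    μ * B v (S w) = d * B v w := by
  simpa [hv.apply_eq_smul] using hcompat v w

theorem eigenvalue_ne_zero_of_pairing (hcompat : ∀ v w, B (T v) (S w) = d * B v w)
    (hB : ∀ v, (∀ w, B v w = 0) → v = 0) (hd : d ≠ 0)
    (hv : T.HasEigenvector μ v) : μ ≠ 0 := by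
  rintro rfl
  refine hv.2 (hB v fun w => ?_)
  simpa [hd] using (mul_pairing_comp_eq_of_hasEigenvector hcompat hv w).symm

theorem hasEigenvector_dualMap_of_pairing (hcompat : ∀ v w, B (T v) (S w) = d * B v w)
    (hB : ∀ v, (∀ w, B v w = 0) → v = 0) (hd : d ≠ 0)
    (hv : T.HasEigenvector μ v) : Module.End.HasEigenvector S.dualMap (d / μ) (B v) := by
  have hμ := eigenvalue_ne_zero_of_pairing hcompat hB hd hv
  refine ⟨Module.End.mem_eigenspace_iff.mpr (LinearMap.ext fun w => ?_),
    fun h => hv.2 (hB v fun w => by simp [h])⟩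
  simp only [LinearMap.dualMap_apply, LinearMap.smul_apply, smul_eq_mul]
  field_simp
  linear_combination mul_pairing_comp_eq_of_hasEigenvector hcompat hv w

end Pairing

theorem Real.rpow_one_div_le_of_le_pow {x L : ℝ} {m : ℕ} (hx : 0 ≤ x) (hL : 0 ≤ L) (hm : m ≠ 0)
    (h : x ≤ L ^ m) : x ^ (1 / (m : ℝ)) ≤ L :=
  calc x ^ (1 / (m : ℝ)) ≤ (L ^ m) ^ (1 / (m : ℝ)) := by gcongr
    _ = L := by rw [one_div, Real.pow_rpow_inv_natCast hL hm]

theorem Real.rpow_one_div_lt_rpow_one_div_of_rpow_div_lt {a x : ℝ} {m n : ℕ} (ha : 0 ≤ a)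
    (hm : m ≠ 0) (h : a ^ ((m : ℝ) / n) < x) : a ^ (1 / (n : ℝ)) < x ^ (1 / (m : ℝ)) := by
  have := Real.rpow_lt_rpow (Real.rpow_nonneg ha _) h (by positivity : (0 : ℝ) < 1 / m)
  rwa [← Real.rpow_mul ha, div_mul_div_comm, mul_one, mul_comm, ← div_div,
    div_self (by exact_mod_cast hm)] at this

theorem Module.End.HasEigenvalue.norm_rpow_one_div_le_and_lt {𝕜 E : Type*} [NormedField 𝕜]
    [NormedAddCommGroup E] [NormedSpace 𝕜 E] {T : End 𝕜 E} {L : ℝ} {m n : ℕ} (hL : 0 ≤ L)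
    (hm : m ≠ 0) (hT : ∀ u, ‖T u‖ ≤ L ^ m * ‖u‖) {μ : 𝕜} (hμ : T.HasEigenvalue μ) {a : ℝ}
    (ha : 0 ≤ a) (h : a ^ ((m : ℝ) / n) < ‖μ‖) :
    ‖μ‖ ^ (1 / (m : ℝ)) ≤ L ∧ a ^ (1 / (n : ℝ)) < ‖μ‖ ^ (1 / (m : ℝ)) :=
  ⟨Real.rpow_one_div_le_of_le_pow (norm_nonneg μ) hL hm (hμ.norm_le hT),
    Real.rpow_one_div_lt_rpow_one_div_of_rpow_div_lt ha hm h⟩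

theorem Real.rpow_sub_div_lt_div {a x : ℝ} {k n : ℕ} (ha : 0 < a) (hkn : k ≤ n) (hn : n ≠ 0)
    (hx : 0 < x) (h : x < a ^ ((k : ℝ) / n)) : a ^ (((n - k : ℕ) : ℝ) / n) < a / x := by
  have hexp : ((n - k : ℕ) : ℝ) / n = 1 - k / n := by
    rw [Nat.cast_sub hkn, sub_div, div_self (by exact_mod_cast hn)]
  rw [hexp, Real.rpow_sub ha, Real.rpow_one]
  exact div_lt_div_of_pos_left ha hx h

theorem stmt17_general (L : NNReal)
    (n k : ℕ) (hk1 : 1 ≤ k) (hk2 : k ≤ n - 1)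
    (d : ℤ) (hd : 0 < d)
    (V W : Type*) [NormedAddCommGroup V] [NormedSpace ℂ V]
    [NormedAddCommGroup W] [NormedSpace ℂ W] [FiniteDimensional ℂ W]
    (T : V →ₗ[ℂ] V) (S : W →ₗ[ℂ] W)
    (hT : ∀ u : V, ‖T u‖ ≤ (L : ℝ) ^ k * ‖u‖)
    (hS : ∀ w : W, ‖S w‖ ≤ (L : ℝ) ^ (n - k) * ‖w‖)
    (B : V →ₗ[ℂ] W →ₗ[ℂ] ℂ)
    (hB₁ : ∀ v : V, (∀ w : W, B v w = 0) → v = 0)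
    (hcompat : ∀ (v : V) (w : W), B (T v) (S w) = (d : ℂ) * B v w)
    (lam : ℂ) (hlam : Module.End.HasEigenvalue T lam)
    (hne : ‖lam‖ ≠ (d : ℝ) ^ ((k : ℝ) / n)) :
    (d : ℝ) ^ ((1 : ℝ) / n) < (L : ℝ) ∧
      ((‖lam‖ ^ ((1 : ℝ) / k) ≤ (L : ℝ) ∧
          (d : ℝ) ^ ((1 : ℝ) / n) < ‖lam‖ ^ ((1 : ℝ) / k)) ∨
        ∃ mu : ℂ, Module.End.HasEigenvalue S mu ∧
          ‖mu‖ = (d : ℝ) / ‖lam‖ ∧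
          ‖mu‖ ^ ((1 : ℝ) / (n - k)) ≤ (L : ℝ) ∧
          (d : ℝ) ^ ((1 : ℝ) / n) < ‖mu‖ ^ ((1 : ℝ) / (n - k))) := by
  have hkn : k ≤ n := by omega
  have hd' : (0 : ℝ) < d := by exact_mod_cast hd
  rcases hne.lt_or_gt with hlt | hgt
  · obtain ⟨v, hv⟩ := hlam.exists_hasEigenvector
    have hd0 : (d : ℂ) ≠ 0 := by exact_mod_cast hd.ne'
    have hlam0 := eigenvalue_ne_zero_of_pairing hcompat hB₁ hd0 hv
    have hmu : Module.End.HasEigenvalue S (d / lam) :=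
      .of_dualMap <| Module.End.hasEigenvalue_of_hasEigenvector <|
        hasEigenvector_dualMap_of_pairing hcompat hB₁ hd0 hv
    have hnorm : ‖(d : ℂ) / lam‖ = d / ‖lam‖ := by
      rw [norm_div, Complex.norm_intCast, abs_of_pos hd']
    have hmu_gt : (d : ℝ) ^ (((n - k : ℕ) : ℝ) / n) < ‖(d : ℂ) / lam‖ :=
      hnorm ▸ Real.rpow_sub_div_lt_div hd' hkn (by omega) (norm_pos_iff.mpr hlam0) hlt
    obtain ⟨hle, hgt⟩ := hmu.norm_rpow_one_div_le_and_lt L.coe_nonneg (by omega) hS hd'.le hmu_gt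
    rw [Nat.cast_sub hkn] at hle hgt
    exact ⟨hgt.trans_le hle, Or.inr ⟨_, hmu, hnorm, hle, hgt⟩⟩
  · have h := hlam.norm_rpow_one_div_le_and_lt L.coe_nonneg (by omega) hT hd'.le hgt
    exact ⟨h.2.trans_le h.1, Or.inl h⟩

/-- Let `M` be a closed oriented `n`-manifold and `f : M → M` an
`L`-Lipschitz map of degree `d > 0`.  If for some `1 ≤ k ≤ n−1` the induced map
`f^* : H^k(M;ℂ) → H^k(M;ℂ)` has an eigenvalue `λ` with `|λ| ≠ d^{k/n}`, then
`L > d^{1/n}`; more precisely either `|λ|^{1/k} ≤ L` and `|λ|^{1/k} > d^{1/n}`, or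
`f^*` on `H^{n−k}(M;ℂ)` has an eigenvalue `μ` with `|μ| = d/|λ|`, `|μ|^{1/(n−k)} ≤ L`
and `|μ|^{1/(n−k)} > d^{1/n}`.

Here `V, W` model `H^k(M;ℂ)` and `H^{n−k}(M;ℂ)` with the minimal-comass norms, `T, S`
the pullbacks `f^*`, `B` the (nondegenerate) Poincaré duality cup-product pairing into
`H^n(M;ℂ) ≅ ℂ`, under which `f^*` scales by the degree: `B(Tv, Sw) = d·B(v,w)`. -/
theorem stmt17 (M : Type*) [MetricSpace M] [CompactSpace M]
    (f : M → M) (L : NNReal) (hf : LipschitzWith L f)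
    (n k : ℕ) (hn : 1 ≤ n) (hk1 : 1 ≤ k) (hk2 : k ≤ n - 1)
    (d : ℤ) (hd : 0 < d)
    (V W : Type*) [NormedAddCommGroup V] [NormedSpace ℂ V] [FiniteDimensional ℂ V]
    [NormedAddCommGroup W] [NormedSpace ℂ W] [FiniteDimensional ℂ W]
    (T : V →ₗ[ℂ] V) (S : W →ₗ[ℂ] W)
    (hT : ∀ u : V, ‖T u‖ ≤ (L : ℝ) ^ k * ‖u‖)
    (hS : ∀ w : W, ‖S w‖ ≤ (L : ℝ) ^ (n - k) * ‖w‖)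
    (B : V →ₗ[ℂ] W →ₗ[ℂ] ℂ)
    (hB₁ : ∀ v : V, (∀ w : W, B v w = 0) → v = 0)
    (hB₂ : ∀ w : W, (∀ v : V, B v w = 0) → w = 0)
    (hcompat : ∀ (v : V) (w : W), B (T v) (S w) = (d : ℂ) * B v w)
    (lam : ℂ) (hlam : Module.End.HasEigenvalue T lam)
    (hne : ‖lam‖ ≠ (d : ℝ) ^ ((k : ℝ) / n)) :
    (d : ℝ) ^ ((1 : ℝ) / n) < (L : ℝ) ∧
      ((‖lam‖ ^ ((1 : ℝ) / k) ≤ (L : ℝ) ∧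
          (d : ℝ) ^ ((1 : ℝ) / n) < ‖lam‖ ^ ((1 : ℝ) / k)) ∨
        ∃ mu : ℂ, Module.End.HasEigenvalue S mu ∧
          ‖mu‖ = (d : ℝ) / ‖lam‖ ∧
          ‖mu‖ ^ ((1 : ℝ) / (n - k)) ≤ (L : ℝ) ∧
          (d : ℝ) ^ ((1 : ℝ) / n) < ‖mu‖ ^ ((1 : ℝ) / (n - k))) :=
  stmt17_general L n k hk1 hk2 d hd V W T S hT hS B hB₁ hcompat lam hlam hne
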